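/- Upper ε-envelopes of subsolutions are subsolutions: Let n ≥ 2, 0 < λ ≤ Λ, F⁺, F⁻ ∈ E(λ,Λ), let f^± be bounded and uniformly continuous on B₁^±, and g bounded and uniformly continuous on T. Let u be a bounded viscosity subsolution of the flat transmission problem [F^±(D²u) = f^± in B₁^±, u_{xₙ}⁺ − u_{xₙ}⁻ = g on T]. Fix 0 < ρ < 1 and ε > 0 with r_ε := (2ε‖u‖_{L^∞(B₁)})^{1/2} < ρ, and let u^ε be the upper ε-envelope of u in the x'-direction relative to B_ρ. Then for every 0 < r ≤ ρ − r_ε, u^ε is a viscosity subsolution on B_r of the flat transmission problem with interior data f^± − ω_{f^±}(r_ε) on B_r ∩ {±xₙ > 0} and interface data g − ω_g(r_ε) on T ∩ B_r. -/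

import Mathlib

open Metric Set Filter Asymptotics MeasureTheory

noncomputable section

namespace Transmission

/-- `ℝ^d` as a Euclidean space. -/
abbrev E (d : ℕ) : Type := EuclideanSpace ℝ (Fin d)

/-- The first `m` coordinates `x'` of a point `x = (x', xₙ) ∈ ℝ^{m+1}`. -/
def head {m : ℕ} (x : E (m + 1)) : E m := WithLp.toLp 2 (fun i : Fin m => x i.castSucc)

/-- The last coordinate `xₙ` of a point `x = (x', xₙ) ∈ ℝ^{m+1}`. -/
def lastc {m : ℕ} (x : E (m + 1)) : ℝ := x (Fin.last m)

/-- Assemble a point of `ℝ^{m+1}` from `x' ∈ ℝ^m` and `xₙ ∈ ℝ`. -/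
def snoc {m : ℕ} (x' : E m) (t : ℝ) : E (m + 1) :=
  WithLp.toLp 2 (fun i => (Fin.snoc (fun j => x' j) t : Fin (m + 1) → ℝ) i)

/-- The coordinate vector `eₙ`. -/
def en (m : ℕ) : E (m + 1) := EuclideanSpace.single (Fin.last m) 1

/-- `Ω⁺ = B₁ ∩ {xₙ > ψ(x')}`. -/
def Omegap {m : ℕ} (ψ : E m → ℝ) : Set (E (m + 1)) :=
  {x | x ∈ ball (0 : E (m + 1)) 1 ∧ ψ (head x) < lastc x}

/-- `Ω⁻ = B₁ ∩ {xₙ < ψ(x')}`. -/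
def Omegam {m : ℕ} (ψ : E m → ℝ) : Set (E (m + 1)) :=
  {x | x ∈ ball (0 : E (m + 1)) 1 ∧ lastc x < ψ (head x)}

/-- `Γ = B₁ ∩ {xₙ = ψ(x')}`. -/
def Gamma {m : ℕ} (ψ : E m → ℝ) : Set (E (m + 1)) :=
  {x | x ∈ ball (0 : E (m + 1)) 1 ∧ lastc x = ψ (head x)}

/-- The unit normal on `Γ` pointing into `Ω⁺`. -/
def normal {m : ℕ} (ψ : E m → ℝ) (x : E (m + 1)) : E (m + 1) :=
  (Real.sqrt (1 + ‖gradient ψ (head x)‖ ^ 2))⁻¹ • snoc (-(gradient ψ (head x))) 1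

/-- The Hessian matrix of `φ` at `x`. -/
def hess {d : ℕ} (φ : E d → ℝ) (x : E d) : Matrix (Fin d) (Fin d) ℝ :=
  fun i j => iteratedFDeriv ℝ 2 φ x ![EuclideanSpace.single i 1, EuclideanSpace.single j 1]

/-- Pucci minimal operator `M⁻_{λ,Λ}(M) = λ·Σ(pos eigenvalues) + Λ·Σ(neg eigenvalues)`. -/
def pucciInf {d : ℕ} (lam Lam : ℝ) (M : Matrix (Fin d) (Fin d) ℝ) : ℝ :=
  if h : M.IsHermitian then
    ∑ i, (if 0 ≤ h.eigenvalues i then lam else Lam) * h.eigenvalues i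
  else 0

/-- Pucci maximal operator `M⁺_{λ,Λ}(M) = Λ·Σ(pos eigenvalues) + λ·Σ(neg eigenvalues)`. -/
def pucciSup {d : ℕ} (lam Lam : ℝ) (M : Matrix (Fin d) (Fin d) ℝ) : ℝ :=
  if h : M.IsHermitian then
    ∑ i, (if 0 ≤ h.eigenvalues i then Lam else lam) * h.eigenvalues i
  else 0

/-- Operator norm of a matrix acting on Euclidean space. -/
def matNorm {d : ℕ} (M : Matrix (Fin d) (Fin d) ℝ) : ℝ :=
  ‖LinearMap.toContinuousLinearMap (Matrix.toEuclideanLin M)‖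

/-- The class `E(λ,Λ)` of uniformly elliptic operators with `F(0) = 0`. -/
def UniformlyElliptic {d : ℕ} (lam Lam : ℝ) (F : Matrix (Fin d) (Fin d) ℝ → ℝ) : Prop :=
  F 0 = 0 ∧
  ∀ M N : Matrix (Fin d) (Fin d) ℝ, M.IsHermitian → N.PosSemidef →
    lam * matNorm N ≤ F (M + N) - F M ∧ F (M + N) - F M ≤ Lam * matNorm N

/-- `φ` touches `u` from above at `x₀` (relative to `O`). -/
def TouchesAbove {d : ℕ} (u φ : E d → ℝ) (O : Set (E d)) (x₀ : E d) : Prop :=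
  φ x₀ = u x₀ ∧ ∀ᶠ x in nhds x₀, x ∈ O → u x ≤ φ x

/-- `φ` touches `u` from below at `x₀` (relative to `O`). -/
def TouchesBelow {d : ℕ} (u φ : E d → ℝ) (O : Set (E d)) (x₀ : E d) : Prop :=
  φ x₀ = u x₀ ∧ ∀ᶠ x in nhds x₀, x ∈ O → φ x ≤ u x

/-- Viscosity subsolution: `F(D²u) ≥ f` on `O`. -/
def ViscSubOn {d : ℕ} (F : Matrix (Fin d) (Fin d) ℝ → ℝ) (f u : E d → ℝ)
    (O : Set (E d)) : Prop :=
  ∀ x₀ ∈ O, ∀ φ : E d → ℝ, ContDiffAt ℝ 2 φ x₀ → TouchesAbove u φ O x₀ →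
    f x₀ ≤ F (hess φ x₀)

/-- Viscosity supersolution: `F(D²u) ≤ f` on `O`. -/
def ViscSupOn {d : ℕ} (F : Matrix (Fin d) (Fin d) ℝ → ℝ) (f u : E d → ℝ)
    (O : Set (E d)) : Prop :=
  ∀ x₀ ∈ O, ∀ φ : E d → ℝ, ContDiffAt ℝ 2 φ x₀ → TouchesBelow u φ O x₀ →
    F (hess φ x₀) ≤ f x₀

/-- `u ∈ S̄_{λ,Λ}(f)` on `O` (supersolution class). -/
def InSbar {d : ℕ} (lam Lam : ℝ) (f u : E d → ℝ) (O : Set (E d)) : Prop :=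
  LowerSemicontinuousOn u O ∧
  ∀ x₀ ∈ O, ∀ φ : E d → ℝ, ContDiffAt ℝ 2 φ x₀ → TouchesBelow u φ O x₀ →
    pucciInf lam Lam (hess φ x₀) ≤ f x₀

/-- `u ∈ S̲_{λ,Λ}(f)` on `O` (subsolution class). -/
def InSlower {d : ℕ} (lam Lam : ℝ) (f u : E d → ℝ) (O : Set (E d)) : Prop :=
  UpperSemicontinuousOn u O ∧
  ∀ x₀ ∈ O, ∀ φ : E d → ℝ, ContDiffAt ℝ 2 φ x₀ → TouchesAbove u φ O x₀ →
    f x₀ ≤ pucciSup lam Lam (hess φ x₀)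

/-- `u ∈ S*_{λ,Λ}(f)` on `O`. -/
def InSstar {d : ℕ} (lam Lam : ℝ) (f u : E d → ℝ) (O : Set (E d)) : Prop :=
  (∀ x₀ ∈ O, ∀ φ : E d → ℝ, ContDiffAt ℝ 2 φ x₀ → TouchesAbove u φ O x₀ →
    -|f x₀| ≤ pucciSup lam Lam (hess φ x₀)) ∧
  (∀ x₀ ∈ O, ∀ φ : E d → ℝ, ContDiffAt ℝ 2 φ x₀ → TouchesBelow u φ O x₀ →
    pucciInf lam Lam (hess φ x₀) ≤ |f x₀|)

/-- `u ∈ S_{λ,Λ}(0)` on `O`. -/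
def InS0 {d : ℕ} (lam Lam : ℝ) (u : E d → ℝ) (O : Set (E d)) : Prop :=
  (∀ x₀ ∈ O, ∀ φ : E d → ℝ, ContDiffAt ℝ 2 φ x₀ → TouchesAbove u φ O x₀ →
    0 ≤ pucciSup lam Lam (hess φ x₀)) ∧
  (∀ x₀ ∈ O, ∀ φ : E d → ℝ, ContDiffAt ℝ 2 φ x₀ → TouchesBelow u φ O x₀ →
    pucciInf lam Lam (hess φ x₀) ≤ 0)

/-- The viscosity transmission condition `u_ν⁺ − u_ν⁻ ≤ g` on `Γ` (supersolution side):
test functions touch `u` from below. -/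
def TransLE {m : ℕ} (ψ : E m → ℝ) (g u : E (m + 1) → ℝ) : Prop :=
  ∀ x₀ ∈ Gamma ψ, ∀ δ > (0 : ℝ), ∀ φ : E (m + 1) → ℝ, ∀ Lp Lm : E (m + 1) →L[ℝ] ℝ,
    ContinuousOn φ (ball x₀ δ) →
    ContDiffOn ℝ 1 φ (ball x₀ δ ∩ closure (Omegap ψ)) →
    ContDiffOn ℝ 1 φ (ball x₀ δ ∩ closure (Omegam ψ)) →
    HasFDerivWithinAt φ Lp (ball x₀ δ ∩ closure (Omegap ψ)) x₀ →
    HasFDerivWithinAt φ Lm (ball x₀ δ ∩ closure (Omegam ψ)) x₀ →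
    φ x₀ = u x₀ → (∀ x ∈ ball x₀ δ, φ x ≤ u x) →
    Lp (normal ψ x₀) - Lm (normal ψ x₀) ≤ g x₀

/-- The viscosity transmission condition `u_ν⁺ − u_ν⁻ ≥ g` on `Γ` (subsolution side):
test functions touch `u` from above. -/
def TransGE {m : ℕ} (ψ : E m → ℝ) (g u : E (m + 1) → ℝ) : Prop :=
  ∀ x₀ ∈ Gamma ψ, ∀ δ > (0 : ℝ), ∀ φ : E (m + 1) → ℝ, ∀ Lp Lm : E (m + 1) →L[ℝ] ℝ,
    ContinuousOn φ (ball x₀ δ) →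
    ContDiffOn ℝ 1 φ (ball x₀ δ ∩ closure (Omegap ψ)) →
    ContDiffOn ℝ 1 φ (ball x₀ δ ∩ closure (Omegam ψ)) →
    HasFDerivWithinAt φ Lp (ball x₀ δ ∩ closure (Omegap ψ)) x₀ →
    HasFDerivWithinAt φ Lm (ball x₀ δ ∩ closure (Omegam ψ)) x₀ →
    φ x₀ = u x₀ → (∀ x ∈ ball x₀ δ, u x ≤ φ x) →
    g x₀ ≤ Lp (normal ψ x₀) - Lm (normal ψ x₀)

/-- The viscosity transmission condition `u_ν⁺ − u_ν⁻ = g` on `Γ`. -/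
def TransEQ {m : ℕ} (ψ : E m → ℝ) (g u : E (m + 1) → ℝ) : Prop :=
  TransLE ψ g u ∧ TransGE ψ g u

/-- A viscosity solution of the curved-interface transmission problem
`F⁺(D²u) = f⁺` in `Ω⁺`, `F⁻(D²u) = f⁻` in `Ω⁻`, `u_ν⁺ − u_ν⁻ = g` on `Γ`. -/
def CurvedSol {m : ℕ} (ψ : E m → ℝ) (Fp Fm : Matrix (Fin (m + 1)) (Fin (m + 1)) ℝ → ℝ)
    (fp fm g u : E (m + 1) → ℝ) : Prop :=
  ContinuousOn u (ball (0 : E (m + 1)) 1) ∧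
  ViscSubOn Fp fp u (Omegap ψ) ∧ ViscSupOn Fp fp u (Omegap ψ) ∧
  ViscSubOn Fm fm u (Omegam ψ) ∧ ViscSupOn Fm fm u (Omegam ψ) ∧
  TransGE ψ g u ∧ TransLE ψ g u

/-! ### The flat interface setting -/

/-- `B_r⁺ = B_r ∩ {xₙ > 0}`. -/
def BpR (m : ℕ) (r : ℝ) : Set (E (m + 1)) :=
  {x | x ∈ ball (0 : E (m + 1)) r ∧ 0 < lastc x}

/-- `B_r⁻ = B_r ∩ {xₙ < 0}`. -/
def BmR (m : ℕ) (r : ℝ) : Set (E (m + 1)) :=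
  {x | x ∈ ball (0 : E (m + 1)) r ∧ lastc x < 0}

/-- `T_r = B_r ∩ {xₙ = 0}`. -/
def TR (m : ℕ) (r : ℝ) : Set (E (m + 1)) :=
  {x | x ∈ ball (0 : E (m + 1)) r ∧ lastc x = 0}

/-- The open upper half space `{xₙ > 0}`. -/
def Hp (m : ℕ) : Set (E (m + 1)) := {x | 0 < lastc x}

/-- The open lower half space `{xₙ < 0}`. -/
def Hm (m : ℕ) : Set (E (m + 1)) := {x | lastc x < 0}

/-- Flat interface subsolution condition `u_{xₙ}⁺ − u_{xₙ}⁻ ≥ g(x₀)` at `x₀ ∈ T` in the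
viscosity sense: test functions are `C²` up to the boundary on each closed half ball
and touch `u` from above. -/
def FlatTransSubAt {m : ℕ} (g u : E (m + 1) → ℝ) (x₀ : E (m + 1)) : Prop :=
  ∀ δ > (0 : ℝ), ∀ φ : E (m + 1) → ℝ, ∀ Lp Lm : E (m + 1) →L[ℝ] ℝ,
    ContinuousOn φ (ball x₀ δ) →
    ContDiffOn ℝ 2 φ (closure (ball x₀ δ ∩ Hp m)) →
    ContDiffOn ℝ 2 φ (closure (ball x₀ δ ∩ Hm m)) →
    HasFDerivWithinAt φ Lp (closure (ball x₀ δ ∩ Hp m)) x₀ →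
    HasFDerivWithinAt φ Lm (closure (ball x₀ δ ∩ Hm m)) x₀ →
    φ x₀ = u x₀ → (∀ x ∈ ball x₀ δ, u x ≤ φ x) →
    g x₀ ≤ Lp (en m) - Lm (en m)

/-- Flat interface supersolution condition `u_{xₙ}⁺ − u_{xₙ}⁻ ≤ g(x₀)` at `x₀ ∈ T`. -/
def FlatTransSupAt {m : ℕ} (g u : E (m + 1) → ℝ) (x₀ : E (m + 1)) : Prop :=
  ∀ δ > (0 : ℝ), ∀ φ : E (m + 1) → ℝ, ∀ Lp Lm : E (m + 1) →L[ℝ] ℝ,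
    ContinuousOn φ (ball x₀ δ) →
    ContDiffOn ℝ 2 φ (closure (ball x₀ δ ∩ Hp m)) →
    ContDiffOn ℝ 2 φ (closure (ball x₀ δ ∩ Hm m)) →
    HasFDerivWithinAt φ Lp (closure (ball x₀ δ ∩ Hp m)) x₀ →
    HasFDerivWithinAt φ Lm (closure (ball x₀ δ ∩ Hm m)) x₀ →
    φ x₀ = u x₀ → (∀ x ∈ ball x₀ δ, φ x ≤ u x) →
    Lp (en m) - Lm (en m) ≤ g x₀

/-- Viscosity subsolution of the flat transmission problem on `B_r`. -/
def FlatSub {m : ℕ} (r : ℝ) (Fp Fm : Matrix (Fin (m + 1)) (Fin (m + 1)) ℝ → ℝ)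
    (fp fm g u : E (m + 1) → ℝ) : Prop :=
  UpperSemicontinuousOn u (ball (0 : E (m + 1)) r) ∧
  ViscSubOn Fp fp u (BpR m r) ∧ ViscSubOn Fm fm u (BmR m r) ∧
  ∀ x₀ ∈ TR m r, FlatTransSubAt g u x₀

/-- Viscosity supersolution of the flat transmission problem on `B_r`. -/
def FlatSup {m : ℕ} (r : ℝ) (Fp Fm : Matrix (Fin (m + 1)) (Fin (m + 1)) ℝ → ℝ)
    (fp fm g u : E (m + 1) → ℝ) : Prop :=
  LowerSemicontinuousOn u (ball (0 : E (m + 1)) r) ∧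
  ViscSupOn Fp fp u (BpR m r) ∧ ViscSupOn Fm fm u (BmR m r) ∧
  ∀ x₀ ∈ TR m r, FlatTransSupAt g u x₀

/-- Viscosity solution of the flat transmission problem on `B_r`. -/
def FlatSol {m : ℕ} (r : ℝ) (Fp Fm : Matrix (Fin (m + 1)) (Fin (m + 1)) ℝ → ℝ)
    (fp fm g u : E (m + 1) → ℝ) : Prop :=
  ContinuousOn u (ball (0 : E (m + 1)) r) ∧
  FlatSub r Fp Fm fp fm g u ∧ FlatSup r Fp Fm fp fm g u

/-! ### Norms and miscellaneous quantities -/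

/-- Supremum of `f` over `s`. -/
def supOn {d : ℕ} (f : E d → ℝ) (s : Set (E d)) : ℝ := sSup (f '' s)

/-- Infimum of `f` over `s`. -/
def infOn {d : ℕ} (f : E d → ℝ) (s : Set (E d)) : ℝ := sInf (f '' s)

/-- Oscillation of `f` over `s`. -/
def oscOn {d : ℕ} (f : E d → ℝ) (s : Set (E d)) : ℝ := supOn f s - infOn f s

/-- `f` is bounded on `s`. -/
def BddOn {d : ℕ} (f : E d → ℝ) (s : Set (E d)) : Prop := ∃ M, ∀ x ∈ s, |f x| ≤ M

/-- The `L^p` norm of `f` on `s`. -/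
def lpNorm {d : ℕ} (p : ℝ) (f : E d → ℝ) (s : Set (E d)) : ℝ :=
  (∫ x in s, |f x| ^ p) ^ (1 / p)

/-- The average `L^p` norm `(⨍_s |f|^p)^{1/p}` of `f` on `s`. -/
def avgLp {d : ℕ} (p : ℝ) (f : E d → ℝ) (s : Set (E d)) : ℝ :=
  (⨍ x in s, |f x| ^ p) ^ (1 / p)

/-- `‖u‖_{C^{0,β}(s)} ≤ M` (up to a multiplicative constant): a sup bound together with a
`β`-Hölder seminorm bound on `s`. -/
def HolderBoundOn {d : ℕ} (β : ℝ) (u : E d → ℝ) (s : Set (E d)) (M : ℝ) : Prop :=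
  (∀ x ∈ s, |u x| ≤ M) ∧ ∀ x ∈ s, ∀ y ∈ s, |u x - u y| ≤ M * ‖x - y‖ ^ β

/-- `u ∈ C^{1,α}(s)` with `‖u‖_{C^{1,α}(s)} ≤ M` (up to a multiplicative constant),
derivatives understood up to the boundary. -/
def C1alphaBoundOn {d : ℕ} (α : ℝ) (u : E d → ℝ) (s : Set (E d)) (M : ℝ) : Prop :=
  ∃ du : E d → (E d →L[ℝ] ℝ),
    (∀ x ∈ s, HasFDerivWithinAt u (du x) s x) ∧
    (∀ x ∈ s, |u x| ≤ M) ∧ (∀ x ∈ s, ‖du x‖ ≤ M) ∧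
    (∀ x ∈ s, ∀ y ∈ s, ‖du x - du y‖ ≤ M * ‖x - y‖ ^ α)

/-- `u ∈ C^{2,α}(s)` with `‖u‖_{C^{2,α}(s)} ≤ M` (up to a multiplicative constant),
derivatives understood up to the boundary. -/
def C2alphaBoundOn {d : ℕ} (α : ℝ) (u : E d → ℝ) (s : Set (E d)) (M : ℝ) : Prop :=
  ∃ (du : E d → (E d →L[ℝ] ℝ)) (d2u : E d → (E d →L[ℝ] E d →L[ℝ] ℝ)),
    (∀ x ∈ s, HasFDerivWithinAt u (du x) s x) ∧
    (∀ x ∈ s, HasFDerivWithinAt du (d2u x) s x) ∧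
    (∀ x ∈ s, |u x| ≤ M) ∧ (∀ x ∈ s, ‖du x‖ ≤ M) ∧ (∀ x ∈ s, ‖d2u x‖ ≤ M) ∧
    (∀ x ∈ s, ∀ y ∈ s, ‖d2u x - d2u y‖ ≤ M * ‖x - y‖ ^ α)

/-- The quadratic form `v ↦ vᵀ A v` of a matrix. -/
def quadForm {d : ℕ} (A : Matrix (Fin d) (Fin d) ℝ) (v : E d) : ℝ :=
  ∑ i, ∑ j, A i j * v i * v j

/-- `φ` has one-sided first derivative `L` and one-sided Hessian `A` at `x₀` within `s`. -/
def HasHessianWithinAt {d : ℕ} (φ : E d → ℝ) (L : E d →L[ℝ] ℝ)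
    (A : Matrix (Fin d) (Fin d) ℝ) (s : Set (E d)) (x₀ : E d) : Prop :=
  (fun x => φ x - φ x₀ - L (x - x₀) - (1 / 2) * quadForm A (x - x₀))
    =o[nhdsWithin x₀ s] (fun x => ‖x - x₀‖ ^ 2)

/-- Upper `ε`-envelope of `u` in the `x'`-direction relative to `B_ρ`. -/
def upperEnv {m : ℕ} (ρ ε : ℝ) (u : E (m + 1) → ℝ) (y : E (m + 1)) : ℝ :=
  sSup ((fun x' : E m => u (snoc x' (lastc y)) - ε⁻¹ * ‖x' - head y‖ ^ 2) ''
    {x' : E m | snoc x' (lastc y) ∈ closedBall (0 : E (m + 1)) ρ})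

/-- Modulus of continuity of `h` on `s`. -/
def modulusOn {d : ℕ} (h : E d → ℝ) (s : Set (E d)) (t : ℝ) : ℝ :=
  sSup ((fun p : E d × E d => |h p.1 - h p.2|) ''
    {p : E d × E d | p.1 ∈ s ∧ p.2 ∈ s ∧ dist p.1 p.2 ≤ t})

end Transmission

/-!
The supremum defining `u^ε(y)` is attained at some `x'`, and comparing with the competitor
`x' = y'` gives `|x' - y'|² ≤ 2ε‖u‖_∞ = r_ε²`. For the horizontal shift `s = (x' - y', 0)`
the function `x ↦ u^ε(x - s) + |x' - y'|²/ε` lies above `u` and touches it at `y + s`. A test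
function touching `u^ε` from above at `y`, translated by `s`, therefore touches `u` from above at
`y + s`, with the same Hessian and the same one-sided derivatives, and the half spaces are
invariant under `s`. So the viscosity inequalities of `u` at `y + s` hold for `u^ε` at `y`,
with the data moved by a distance at most `r_ε`, which costs their modulus of continuity.
Upper semicontinuity of `u^ε` is the maximum theorem for an upper semicontinuous objective over
compact fibers.
-/

open Topology

section FiberSup

variable {X Y : Type*} [TopologicalSpace X] [TopologicalSpace Y]
  {Φ : X × Y → ℝ} {S : Set (X × Y)} {K : Set Y}

theorem isCompact_fiber (hS : IsClosed S) (hK : IsCompact K) (hSK : ∀ p ∈ S, p.2 ∈ K) (x : X) :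
    IsCompact (Prod.mk x ⁻¹' S) :=
  hK.of_isClosed_subset (hS.preimage (Continuous.prodMk_right x)) fun _ hy => hSK _ hy

theorem UpperSemicontinuousOn.fiber (hΦ : UpperSemicontinuousOn Φ S) (x : X) :
    UpperSemicontinuousOn (fun y => Φ (x, y)) (Prod.mk x ⁻¹' S) :=
  hΦ.comp (Continuous.prodMk_right x).continuousOn fun _ hy => hy

theorem UpperSemicontinuousOn.bddAbove_fiber (hΦ : UpperSemicontinuousOn Φ S) (hS : IsClosed S)
    (hK : IsCompact K) (hSK : ∀ p ∈ S, p.2 ∈ K) (x : X) :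
    BddAbove ((fun y => Φ (x, y)) '' (Prod.mk x ⁻¹' S)) :=
  (hΦ.fiber x).bddAbove_of_isCompact (isCompact_fiber hS hK hSK x)

theorem UpperSemicontinuousOn.exists_sSup_fiber_eq (hΦ : UpperSemicontinuousOn Φ S)
    (hS : IsClosed S) (hK : IsCompact K) (hSK : ∀ p ∈ S, p.2 ∈ K) {x : X}
    (hx : (Prod.mk x ⁻¹' S).Nonempty) :
    ∃ y ∈ Prod.mk x ⁻¹' S, sSup ((fun y => Φ (x, y)) '' (Prod.mk x ⁻¹' S)) = Φ (x, y) := by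
  obtain ⟨y, hy, hmax⟩ := (hΦ.fiber x).exists_isMaxOn hx (isCompact_fiber hS hK hSK x)
  refine ⟨y, hy, IsGreatest.csSup_eq ⟨⟨y, hy, rfl⟩, ?_⟩⟩
  rintro _ ⟨z, hz, rfl⟩
  exact hmax hz

theorem UpperSemicontinuousOn.sSup_fiber (hΦ : UpperSemicontinuousOn Φ S) (hS : IsClosed S)
    (hK : IsCompact K) (hSK : ∀ p ∈ S, p.2 ∈ K) {U : Set X}
    (hU : ∀ x ∈ U, (Prod.mk x ⁻¹' S).Nonempty) :
    UpperSemicontinuousOn (fun x => sSup ((fun y => Φ (x, y)) '' (Prod.mk x ⁻¹' S))) U := by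
  intro x₀ _ c hc
  obtain ⟨c', hc', hc'c⟩ := exists_between hc
  have hnear : ∀ᶠ x in 𝓝 x₀, ∀ y ∈ K, (x, y) ∈ S → Φ (x, y) < c' := by
    refine hK.eventually_forall_of_forall_eventually fun y _ => ?_
    by_cases hy : (x₀, y) ∈ S
    · have hlt : Φ (x₀, y) < c' :=
        (le_csSup (hΦ.bddAbove_fiber hS hK hSK x₀) ⟨y, hy, rfl⟩).trans_lt hc'
      exact eventually_nhdsWithin_iff.1 (hΦ _ hy c' hlt)
    · exact (hS.isOpen_compl.eventually_mem hy).mono fun z hz hzS => absurd hzS hz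
  filter_upwards [nhdsWithin_le_nhds hnear, self_mem_nhdsWithin] with x hx hxU
  obtain ⟨y, hy, hsup⟩ := hΦ.exists_sSup_fiber_eq hS hK hSK (hU x hxU)
  rw [hsup]
  exact (hx y (hSK _ hy) hy).trans hc'c

end FiberSup

namespace Transmission

section Coordinates

variable {m : ℕ}

theorem lastc_snoc (x' : E m) (t : ℝ) : lastc (snoc x' t) = t := by
  simp [lastc, snoc]

theorem lastc_add (x y : E (m + 1)) : lastc (x + y) = lastc x + lastc y := rfl

theorem lastc_sub (x y : E (m + 1)) : lastc (x - y) = lastc x - lastc y := rfl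

theorem snoc_head_add (y : E (m + 1)) (w : E m) :
    snoc (head y + w) (lastc y) = y + snoc w 0 := by
  ext i
  refine Fin.lastCases ?_ (fun _ => ?_) i <;> simp [snoc, head, lastc]

theorem snoc_head_lastc (y : E (m + 1)) : snoc (head y) (lastc y) = y := by
  ext i
  refine Fin.lastCases ?_ (fun _ => ?_) i <;> simp [snoc, head, lastc]

theorem norm_snoc_sq (x' : E m) (t : ℝ) : ‖snoc x' t‖ ^ 2 = ‖x'‖ ^ 2 + t ^ 2 := by
  simp [EuclideanSpace.norm_sq_eq, Fin.sum_univ_castSucc, snoc]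

theorem norm_snoc_zero (w : E m) : ‖snoc w 0‖ = ‖w‖ := by
  simpa using norm_snoc_sq w 0

theorem norm_le_norm_snoc (x' : E m) (t : ℝ) : ‖x'‖ ≤ ‖snoc x' t‖ := by
  nlinarith [norm_snoc_sq x' t, norm_nonneg x', norm_nonneg (snoc x' t), sq_nonneg t]

theorem continuous_lastc : Continuous (lastc (m := m)) :=
  (continuous_apply _).comp (PiLp.continuous_ofLp 2 _)

theorem continuous_head : Continuous (head (m := m)) :=
  (PiLp.continuous_toLp 2 _).comp
    (continuous_pi fun _ => (continuous_apply _).comp (PiLp.continuous_ofLp 2 _))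

theorem continuous_snoc : Continuous fun p : E m × ℝ => snoc p.1 p.2 := by
  refine (PiLp.continuous_toLp 2 _).comp (continuous_pi fun i => ?_)
  refine Fin.lastCases ?_ (fun j => ?_) i
  · simpa using continuous_snd
  · simp only [Fin.snoc_castSucc]
    fun_prop

end Coordinates

section Envelope

variable {m : ℕ} {ρ ε M : ℝ} {u : E (m + 1) → ℝ}

def envGraph (m : ℕ) (ρ : ℝ) : Set (E (m + 1) × E m) :=
  {p | snoc p.2 (lastc p.1) ∈ closedBall 0 ρ}

def envObjective (ε : ℝ) (u : E (m + 1) → ℝ) (p : E (m + 1) × E m) : ℝ :=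
  u (snoc p.2 (lastc p.1)) - ε⁻¹ * ‖p.2 - head p.1‖ ^ 2

theorem upperEnv_eq_sSup (y : E (m + 1)) :
    upperEnv ρ ε u y =
      sSup ((fun x' => envObjective ε u (y, x')) '' (Prod.mk y ⁻¹' envGraph m ρ)) :=
  rfl

theorem continuous_snoc_snd_lastc_fst :
    Continuous fun p : E (m + 1) × E m => snoc p.2 (lastc p.1) :=
  continuous_snoc.comp (continuous_snd.prodMk (continuous_lastc.comp continuous_fst))

theorem isClosed_envGraph : IsClosed (envGraph m ρ) :=
  isClosed_closedBall.preimage continuous_snoc_snd_lastc_fst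

theorem snd_mem_closedBall_of_mem_envGraph {p : E (m + 1) × E m} (hp : p ∈ envGraph m ρ) :
    p.2 ∈ closedBall 0 ρ :=
  mem_closedBall_zero_iff.2 ((norm_le_norm_snoc _ _).trans (mem_closedBall_zero_iff.1 hp))

theorem upperSemicontinuousOn_envObjective (husc : UpperSemicontinuousOn u (closedBall 0 ρ)) :
    UpperSemicontinuousOn (envObjective ε u) (envGraph m ρ) := by
  have hu : UpperSemicontinuousOn (fun p : E (m + 1) × E m => u (snoc p.2 (lastc p.1)))
      (envGraph m ρ) :=
    husc.comp continuous_snoc_snd_lastc_fst.continuousOn fun _ hp => hp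
  have hquad : Continuous fun p : E (m + 1) × E m => -(ε⁻¹ * ‖p.2 - head p.1‖ ^ 2) :=
    (((continuous_snd.sub (continuous_head.comp continuous_fst)).norm.pow 2).const_mul _).neg
  have h := hu.add hquad.continuousOn.upperSemicontinuousOn
  simp only [← sub_eq_add_neg] at h
  exact h

variable (husc : UpperSemicontinuousOn u (closedBall 0 ρ))
include husc

theorem envObjective_le_upperEnv {y : E (m + 1)} {x' : E m} (hx' : (y, x') ∈ envGraph m ρ) :
    envObjective ε u (y, x') ≤ upperEnv ρ ε u y := by
  rw [upperEnv_eq_sSup]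
  exact le_csSup ((upperSemicontinuousOn_envObjective husc).bddAbove_fiber isClosed_envGraph
    (isCompact_closedBall 0 ρ) (fun _ => snd_mem_closedBall_of_mem_envGraph) y) ⟨x', hx', rfl⟩

theorem exists_upperEnv_eq {y : E (m + 1)} (hy : y ∈ closedBall 0 ρ) :
    ∃ x', (y, x') ∈ envGraph m ρ ∧ upperEnv ρ ε u y = envObjective ε u (y, x') :=
  (upperSemicontinuousOn_envObjective husc).exists_sSup_fiber_eq isClosed_envGraph
    (isCompact_closedBall 0 ρ) (fun _ => snd_mem_closedBall_of_mem_envGraph)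
    ⟨head y, by simpa [envGraph, snoc_head_lastc] using hy⟩

theorem upperSemicontinuousOn_upperEnv :
    UpperSemicontinuousOn (upperEnv ρ ε u) (closedBall 0 ρ) :=
  (upperSemicontinuousOn_envObjective husc).sSup_fiber isClosed_envGraph
    (isCompact_closedBall 0 ρ) (fun _ => snd_mem_closedBall_of_mem_envGraph)
    fun y hy => ⟨head y, by simpa [envGraph, snoc_head_lastc] using hy⟩

theorem le_upperEnv_sub_snoc (w : E m) {x : E (m + 1)} (hx : x ∈ closedBall 0 ρ) :
    u x ≤ upperEnv ρ ε u (x - snoc w 0) + ε⁻¹ * ‖w‖ ^ 2 := by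
  set y := x - snoc w 0
  have hsnoc : snoc (head y + w) (lastc y) = x := by rw [snoc_head_add, sub_add_cancel]
  have h := envObjective_le_upperEnv husc (ε := ε) (y := y) (x' := head y + w)
    (by simpa [envGraph, hsnoc] using hx)
  simp only [envObjective, hsnoc, add_sub_cancel_left] at h
  exact sub_le_iff_le_add.1 h

theorem exists_shift_upperEnv_eq (hε : 0 < ε) (hM : ∀ x ∈ closedBall 0 ρ, |u x| ≤ M)
    {y : E (m + 1)} (hy : y ∈ closedBall 0 ρ) :
    ∃ w : E m, ‖w‖ ≤ √(2 * ε * M) ∧ u (y + snoc w 0) = upperEnv ρ ε u y + ε⁻¹ * ‖w‖ ^ 2 := by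
  obtain ⟨x', hx', hmax⟩ := exists_upperEnv_eq husc hy
  have hsnoc : snoc x' (lastc y) = y + snoc (x' - head y) 0 := by
    rw [← snoc_head_add, add_sub_cancel]
  have hself : u y ≤ upperEnv ρ ε u y := by
    simpa [envObjective, snoc_head_lastc] using
      envObjective_le_upperEnv husc (ε := ε) (y := y) (x' := head y)
        (by simpa [envGraph, snoc_head_lastc] using hy)
  simp only [envGraph, mem_ofPred_eq, hsnoc] at hx'
  simp only [envObjective, hsnoc] at hmax
  have hgap : ε⁻¹ * ‖x' - head y‖ ^ 2 ≤ 2 * M := by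
    rw [hmax] at hself
    generalize ε⁻¹ * ‖x' - head y‖ ^ 2 = q at hself ⊢
    linarith [(abs_le.1 (hM _ hy)).1, (abs_le.1 (hM _ hx')).2]
  have hsq : ‖x' - head y‖ ^ 2 ≤ 2 * ε * M :=
    calc ‖x' - head y‖ ^ 2 = ε * (ε⁻¹ * ‖x' - head y‖ ^ 2) := by field_simp
      _ ≤ ε * (2 * M) := by gcongr
      _ = 2 * ε * M := by ring
  exact ⟨x' - head y, by simpa using Real.abs_le_sqrt hsq, sub_eq_iff_eq_add.1 hmax.symm⟩

theorem exists_shift_dominating_upperEnv (hε : 0 < ε) (hM : ∀ x ∈ closedBall 0 ρ, |u x| ≤ M)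
    {r : ℝ} (hr : r ≤ ρ - √(2 * ε * M)) {y : E (m + 1)} (hy : y ∈ ball 0 r) :
    ∃ s : E (m + 1), lastc s = 0 ∧ dist y (y + s) ≤ √(2 * ε * M) ∧ y + s ∈ ball 0 ρ ∧
      ∃ c, u (y + s) = upperEnv ρ ε u y + c ∧
        ∀ᶠ x in 𝓝 (y + s), u x ≤ upperEnv ρ ε u (x - s) + c := by
  have hyρ : y ∈ closedBall 0 ρ :=
    ball_subset_closedBall (ball_subset_ball (by linarith [Real.sqrt_nonneg (2 * ε * M)]) hy)
  obtain ⟨w, hw, heq⟩ := exists_shift_upperEnv_eq husc hε hM hyρ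
  have hdist : dist y (y + snoc w 0) ≤ √(2 * ε * M) := by
    rwa [dist_self_add_right, norm_snoc_zero]
  have hball : y + snoc w 0 ∈ ball 0 ρ := by
    rw [mem_ball_zero_iff]
    calc ‖y + snoc w 0‖ ≤ ‖y‖ + ‖snoc w 0‖ := norm_add_le _ _
      _ < r + √(2 * ε * M) :=
        add_lt_add_of_lt_of_le (mem_ball_zero_iff.1 hy) (by rwa [norm_snoc_zero])
      _ ≤ ρ := by linarith
  refine ⟨snoc w 0, lastc_snoc w 0, hdist, hball, _, heq, ?_⟩
  filter_upwards [isOpen_ball.mem_nhds hball] with x hx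
  exact le_upperEnv_sub_snoc husc w (ball_subset_closedBall hx)

end Envelope

theorem sub_modulusOn_le {d : ℕ} {f : E d → ℝ} {s : Set (E d)} (hf : BddOn f s) {x y : E d}
    (hx : x ∈ s) (hy : y ∈ s) {t : ℝ} (hxy : dist x y ≤ t) :
    f x - modulusOn f s t ≤ f y := by
  obtain ⟨C, hC⟩ := hf
  have hbdd : BddAbove ((fun p : E d × E d => |f p.1 - f p.2|) ''
      {p | p.1 ∈ s ∧ p.2 ∈ s ∧ dist p.1 p.2 ≤ t}) := by
    refine ⟨2 * C, ?_⟩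
    rintro _ ⟨⟨a, b⟩, ⟨ha, hb, -⟩, rfl⟩
    linarith [abs_sub (f a) (f b), hC a ha, hC b hb]
  have hmod : |f x - f y| ≤ modulusOn f s t := le_csSup hbdd ⟨(x, y), ⟨hx, hy, hxy⟩, rfl⟩
  linarith [le_abs_self (f x - f y)]

section ShiftedTestFunctions

theorem hess_comp_sub_add_const {d : ℕ} (φ : E d → ℝ) (s : E d) (c : ℝ) (x : E d) :
    hess (fun z => φ (z - s) + c) x = hess φ (x - s) := by
  have h : fderiv ℝ (fun z => φ (z - s) + c) = fderiv ℝ (fun z => φ (z - s)) :=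
    funext fun _ => fderiv_add_const c
  ext i j
  simp only [hess]
  rw [iteratedFDeriv_two_apply, h, ← iteratedFDeriv_two_apply, iteratedFDeriv_comp_sub]

theorem hasFDerivWithinAt_comp_sub_add_const {d : ℕ} {φ : E d → ℝ} {L : E d →L[ℝ] ℝ}
    {A B : Set (E d)} {y₀ s : E d} (c : ℝ) (hφ : HasFDerivWithinAt φ L B y₀)
    (hAB : MapsTo (· - s) A B) :
    HasFDerivWithinAt (fun x => φ (x - s) + c) L A (y₀ + s) := by
  rw [← add_sub_cancel_right y₀ s] at hφ
  simpa using (hφ.comp (y₀ + s) (hasFDerivAt_sub_const s).hasFDerivWithinAt hAB).add_const c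

theorem ViscSubOn.le_of_touchesAbove_shift {d : ℕ} {F : Matrix (Fin d) (Fin d) ℝ → ℝ}
    {f u v : E d → ℝ} {O O' : Set (E d)} {y₀ s : E d} {c : ℝ} (hu : ViscSubOn F f u O)
    (hO : y₀ + s ∈ O) (hOO' : ∀ᶠ x in 𝓝 (y₀ + s), x ∈ O → x - s ∈ O')
    (hdom : ∀ᶠ x in 𝓝 (y₀ + s), u x ≤ v (x - s) + c) (heq : u (y₀ + s) = v y₀ + c)
    {φ : E d → ℝ} (hφ : ContDiffAt ℝ 2 φ y₀) (htouch : TouchesAbove v φ O' y₀) :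
    f (y₀ + s) ≤ F (hess φ y₀) := by
  have hshift : Tendsto (· - s) (𝓝 (y₀ + s)) (𝓝 y₀) := by
    simpa using (continuous_sub_right s).tendsto (y₀ + s)
  have hψ : ContDiffAt ℝ 2 (fun x => φ (x - s) + c) (y₀ + s) := by
    rw [← add_sub_cancel_right y₀ s] at hφ
    have hτ : ContDiffAt ℝ 2 (· - s : E d → E d) (y₀ + s) := contDiffAt_id.sub contDiffAt_const
    exact (hφ.comp (y₀ + s) hτ).add contDiffAt_const
  have htouch' : TouchesAbove u (fun x => φ (x - s) + c) O (y₀ + s) := by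
    refine ⟨by simp [heq, htouch.1], ?_⟩
    filter_upwards [hOO', hdom, hshift.eventually htouch.2] with x hxO' hxdom hxφ hxO
    linarith [hxφ (hxO' hxO)]
  simpa [hess_comp_sub_add_const] using hu _ hO _ hψ htouch'

theorem FlatTransSubAt.of_shift {m : ℕ} {g g' u v : E (m + 1) → ℝ} {y₀ s : E (m + 1)} {c : ℝ}
    (hs : lastc s = 0) (hu : FlatTransSubAt g u (y₀ + s))
    (hdom : ∀ᶠ x in 𝓝 (y₀ + s), u x ≤ v (x - s) + c) (heq : u (y₀ + s) = v y₀ + c)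
    (hg : g' y₀ ≤ g (y₀ + s)) : FlatTransSubAt g' v y₀ := by
  intro δ hδ φ Lp Lm hφc hφp hφm hLp hLm hφeq hφle
  obtain ⟨δ', hδ', hdom'⟩ := Metric.eventually_nhds_iff_ball.1 hdom
  have hball : MapsTo (· - s) (ball (y₀ + s) (min δ δ')) (ball y₀ δ) := fun x hx => by
    simpa [dist_sub_eq_dist_add_right] using (mem_ball.1 hx).trans_le (min_le_left δ δ')
  have hhalf (I : Set ℝ) : MapsTo (· - s) (closure (ball (y₀ + s) (min δ δ') ∩ lastc ⁻¹' I))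
      (closure (ball y₀ δ ∩ lastc ⁻¹' I)) :=
    (hball.inter_inter fun x hx => by simpa [mem_preimage, lastc_sub, hs] using hx).closure
      (continuous_sub_right s)
  have hτ : ContDiff ℝ 2 (· - s : E (m + 1) → E (m + 1)) := contDiff_id.sub contDiff_const
  refine hg.trans (hu (min δ δ') (lt_min hδ hδ') (fun x => φ (x - s) + c) Lp Lm ?_ ?_ ?_ ?_ ?_
    ?_ ?_)
  · exact (hφc.comp (continuous_sub_right s).continuousOn hball).add continuousOn_const
  · exact (hφp.comp hτ.contDiffOn (hhalf (Ioi 0))).add contDiffOn_const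
  · exact (hφm.comp hτ.contDiffOn (hhalf (Iio 0))).add contDiffOn_const
  · exact hasFDerivWithinAt_comp_sub_add_const c hLp (hhalf (Ioi 0))
  · exact hasFDerivWithinAt_comp_sub_add_const c hLm (hhalf (Iio 0))
  · simp [heq, hφeq]
  · intro x hx
    linarith [hdom' x (ball_subset_ball (min_le_right δ δ') hx), hφle _ (hball hx)]

end ShiftedTestFunctions

section EnvelopeSubsolution

variable {m : ℕ} {ρ ε M : ℝ} {u : E (m + 1) → ℝ}
  (husc : UpperSemicontinuousOn u (closedBall 0 ρ)) (hε : 0 < ε)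
  (hM : ∀ x ∈ closedBall 0 ρ, |u x| ≤ M) (hρ1 : ρ < 1)
include husc hε hM hρ1

theorem viscSubOn_upperEnv (I : Set ℝ) {F : Matrix (Fin (m + 1)) (Fin (m + 1)) ℝ → ℝ}
    {f : E (m + 1) → ℝ} (hf : BddOn f (ball 0 1 ∩ lastc ⁻¹' I))
    (hu : ViscSubOn F f u (ball 0 1 ∩ lastc ⁻¹' I)) {r : ℝ} (hr : r ≤ ρ - √(2 * ε * M)) :
    ViscSubOn F (fun x => f x - modulusOn f (ball 0 1 ∩ lastc ⁻¹' I) √(2 * ε * M))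
      (upperEnv ρ ε u) (ball 0 r ∩ lastc ⁻¹' I) := by
  rintro y ⟨hyr, hyI⟩ φ hφ htouch
  obtain ⟨s, hs, hdist, hball, c, heq, hdom⟩ := exists_shift_dominating_upperEnv husc hε hM hr hyr
  have hyO : y ∈ ball 0 1 ∩ lastc ⁻¹' I :=
    ⟨ball_subset_ball (by linarith [Real.sqrt_nonneg (2 * ε * M)]) hyr, hyI⟩
  have hxO : y + s ∈ ball 0 1 ∩ lastc ⁻¹' I :=
    ⟨ball_subset_ball hρ1.le hball, by simpa [mem_preimage, lastc_add, hs] using hyI⟩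
  have hOO' : ∀ᶠ x in 𝓝 (y + s),
      x ∈ ball 0 1 ∩ lastc ⁻¹' I → x - s ∈ ball 0 r ∩ lastc ⁻¹' I := by
    have hnear : ∀ᶠ x in 𝓝 (y + s), x - s ∈ ball 0 r :=
      (continuous_sub_right s).continuousAt.preimage_mem_nhds
        (by simpa using isOpen_ball.mem_nhds hyr)
    filter_upwards [hnear] with x hx hxO
    exact ⟨hx, by simpa [mem_preimage, lastc_sub, hs] using hxO.2⟩
  exact (sub_modulusOn_le hf hyO hxO hdist).trans
    (hu.le_of_touchesAbove_shift hxO hOO' hdom heq hφ htouch)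

theorem flatTransSubAt_upperEnv {g : E (m + 1) → ℝ} (hg : BddOn g (TR m 1))
    (hu : ∀ x ∈ TR m 1, FlatTransSubAt g u x) {r : ℝ} (hr : r ≤ ρ - √(2 * ε * M)) :
    ∀ y ∈ TR m r,
      FlatTransSubAt (fun x => g x - modulusOn g (TR m 1) √(2 * ε * M)) (upperEnv ρ ε u) y := by
  rintro y ⟨hyr, hy0⟩
  obtain ⟨s, hs, hdist, hball, c, heq, hdom⟩ := exists_shift_dominating_upperEnv husc hε hM hr hyr
  have hyT : y ∈ TR m 1 :=
    ⟨ball_subset_ball (by linarith [Real.sqrt_nonneg (2 * ε * M)]) hyr, hy0⟩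
  have hxT : y + s ∈ TR m 1 := ⟨ball_subset_ball hρ1.le hball, by simp [lastc_add, hs, hy0]⟩
  exact (hu _ hxT).of_shift hs hdom heq (sub_modulusOn_le hg hyT hxT hdist)

end EnvelopeSubsolution

theorem upper_envelope_subsolution_general (m : ℕ)
    (Fp Fm : Matrix (Fin (m + 1)) (Fin (m + 1)) ℝ → ℝ)
    (fp fm g u : E (m + 1) → ℝ)
    (hfpb : BddOn fp (BpR m 1))
    (hfmb : BddOn fm (BmR m 1))
    (hgb : BddOn g (TR m 1))
    (hub : BddOn u (ball (0 : E (m + 1)) 1))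
    (hsub : FlatSub 1 Fp Fm fp fm g u)
    (ρ ε : ℝ) (hρ1 : ρ < 1) (hε : 0 < ε)
    (rε : ℝ)
    (hrε : rε = Real.sqrt (2 * ε * supOn (fun x => |u x|) (ball (0 : E (m + 1)) 1))) :
    ∀ r : ℝ, 0 < r → r ≤ ρ - rε →
      FlatSub r Fp Fm
        (fun x => fp x - modulusOn fp (BpR m 1) rε)
        (fun x => fm x - modulusOn fm (BmR m 1) rε)
        (fun x => g x - modulusOn g (TR m 1) rε)
        (upperEnv ρ ε u) := by
  intro r _ hr
  set M := supOn (fun x => |u x|) (ball (0 : E (m + 1)) 1)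
  subst hrε
  have hM : ∀ x ∈ closedBall 0 ρ, |u x| ≤ M := by
    obtain ⟨C, hC⟩ := hub
    refine fun x hx => le_csSup ⟨C, ?_⟩ (mem_image_of_mem _ (closedBall_subset_ball hρ1 hx))
    rintro _ ⟨z, hz, rfl⟩
    exact hC z hz
  have husc : UpperSemicontinuousOn u (closedBall 0 ρ) := hsub.1.mono (closedBall_subset_ball hρ1)
  have hrρ : ball (0 : E (m + 1)) r ⊆ closedBall 0 ρ :=
    ball_subset_closedBall.trans
      (closedBall_subset_closedBall (by linarith [Real.sqrt_nonneg (2 * ε * M)]))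
  exact ⟨(upperSemicontinuousOn_upperEnv husc).mono hrρ,
    viscSubOn_upperEnv husc hε hM hρ1 (Ioi 0) hfpb hsub.2.1 hr,
    viscSubOn_upperEnv husc hε hM hρ1 (Iio 0) hfmb hsub.2.2.1 hr,
    flatTransSubAt_upperEnv husc hε hM hρ1 hgb hsub.2.2.2 hr⟩

/-- **Upper `ε`-envelopes of subsolutions are subsolutions** (Proposition 4.4). -/
theorem upper_envelope_subsolution (m : ℕ) (hm : 1 ≤ m) (lam Lam : ℝ)
    (hlam : 0 < lam) (hlL : lam ≤ Lam)
    (Fp Fm : Matrix (Fin (m + 1)) (Fin (m + 1)) ℝ → ℝ)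
    (hFp : UniformlyElliptic lam Lam Fp) (hFm : UniformlyElliptic lam Lam Fm)
    (fp fm g u : E (m + 1) → ℝ)
    (hfpb : BddOn fp (BpR m 1)) (hfpc : UniformContinuousOn fp (BpR m 1))
    (hfmb : BddOn fm (BmR m 1)) (hfmc : UniformContinuousOn fm (BmR m 1))
    (hgb : BddOn g (TR m 1)) (hgc : UniformContinuousOn g (TR m 1))
    (hub : BddOn u (ball (0 : E (m + 1)) 1))
    (hsub : FlatSub 1 Fp Fm fp fm g u)
    (ρ ε : ℝ) (hρ0 : 0 < ρ) (hρ1 : ρ < 1) (hε : 0 < ε)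
    (rε : ℝ)
    (hrε : rε = Real.sqrt (2 * ε * supOn (fun x => |u x|) (ball (0 : E (m + 1)) 1)))
    (hrερ : rε < ρ) :
    ∀ r : ℝ, 0 < r → r ≤ ρ - rε →
      FlatSub r Fp Fm
        (fun x => fp x - modulusOn fp (BpR m 1) rε)
        (fun x => fm x - modulusOn fm (BmR m 1) rε)
        (fun x => g x - modulusOn g (TR m 1) rε)
        (upperEnv ρ ε u) :=
  upper_envelope_subsolution_general m Fp Fm fp fm g u hfpb hfmb hgb hub hsub ρ ε hρ1 hε rε hrε

end Transmission
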